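/- Let 𝒜 be a finite set of nonnegative m×m matrices, let A* ∈ 𝒜 be primitive with spectral radius λ > 0 and positive Perron vector v (A*v = λv), and suppose A v ≥ λ v for all A ∈ 𝒜. Define the Bellman operator ℱ on ℝ₊^m by (ℱx)_a = min over A ∈ 𝒜 of (A x)_a. Then ℱ(v) = λ v, and for the normalized iterates yₙ := λ^{-n} ℱⁿ(𝟙) (where 𝟙 is the all-ones vector), the sequence yₙ converges to β v for some β > 0. -/

import Mathlib

open Matrix Filter Topology

noncomputable def specRad {n : Type*} [Fintype n] [DecidableEq n]
    (A : Matrix n n ℝ) : ℝ :=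
  sSup {r : ℝ | ∃ μ ∈ spectrum ℂ (A.map Complex.ofReal), r = ‖μ‖}

def IsPrimitive {n : Type*} [Fintype n] [DecidableEq n]
    (A : Matrix n n ℝ) : Prop :=
  ∃ k : ℕ, 1 ≤ k ∧ ∀ i j, 0 < (A ^ k) i j

/-!
Normalise by `λ`: the map `G = λ⁻¹ ℱ` is monotone, fixes every point of the ray `ℝ₊ v`, and after
`k` steps (with `(A*)ᵏ > 0`) pushes any `z ≤ c v`, `z ≠ c v`, strictly below `c v` in every
coordinate. The ratio `r(x) = maxₐ xₐ / vₐ` is then non-increasing along the orbit of `𝟙`, hence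
converges to some `β > 0`; the orbit stays in a compact box, and at any accumulation point `z` both
`r(z)` and `r(Gᵏ z)` equal `β`, which by strictness forces `z = β v`.
-/

section Ratio

variable {ι : Type*} [Fintype ι]

lemma exists_pos_smul_le {v x : ι → ℝ} (hv : ∀ i, 0 < v i) (hx : ∀ i, 0 < x i) :
    ∃ a : ℝ, 0 < a ∧ a • v ≤ x := by
  have hpos (j : ι) : 0 < v j / x j := div_pos (hv j) (hx j)
  have hsum : 0 < 1 + ∑ j, v j / x j :=
    add_pos_of_pos_of_nonneg one_pos (Finset.sum_nonneg fun j _ => (hpos j).le)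
  refine ⟨(1 + ∑ j, v j / x j)⁻¹, inv_pos.2 hsum, fun i => ?_⟩
  have hle : v i / x i ≤ 1 + ∑ j, v j / x j := by
    have := Finset.single_le_sum (fun j _ => (hpos j).le) (Finset.mem_univ i)
    linarith
  rw [Pi.smul_apply, smul_eq_mul, inv_mul_le_iff₀ hsum]
  exact (div_le_iff₀ (hx i)).1 hle

variable [Nonempty ι]

noncomputable def maxRatio (v x : ι → ℝ) : ℝ :=
  Finset.univ.sup' Finset.univ_nonempty fun i => x i / v i

variable {v : ι → ℝ}

lemma le_maxRatio_smul (hv : ∀ i, 0 < v i) (x : ι → ℝ) : x ≤ maxRatio v x • v := fun i => by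
  rw [Pi.smul_apply, smul_eq_mul, ← div_le_iff₀ (hv i)]
  exact Finset.le_sup' (fun i => x i / v i) (Finset.mem_univ i)

lemma maxRatio_le {x : ι → ℝ} {c : ℝ} (hv : ∀ i, 0 < v i) (h : x ≤ c • v) : maxRatio v x ≤ c :=
  Finset.sup'_le _ _ fun i _ => (div_le_iff₀ (hv i)).2 (h i)

lemma le_maxRatio {x : ι → ℝ} {c : ℝ} (hv : ∀ i, 0 < v i) (h : c • v ≤ x) : c ≤ maxRatio v x := by
  obtain ⟨i⟩ := ‹Nonempty ι›
  exact ((le_div_iff₀ (hv i)).2 (h i)).trans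
    (Finset.le_sup' (fun i => x i / v i) (Finset.mem_univ i))

lemma maxRatio_lt {x : ι → ℝ} {c : ℝ} (hv : ∀ i, 0 < v i) (h : ∀ i, x i < c * v i) :
    maxRatio v x < c :=
  (Finset.sup'_lt_iff _).2 fun i _ => (div_lt_iff₀ (hv i)).2 (h i)

lemma continuous_maxRatio (v : ι → ℝ) : Continuous (maxRatio v) :=
  Continuous.finset_sup'_apply _ fun i _ => (continuous_apply i).div_const _

end Ratio

section Convergence

variable {ι : Type*} [Fintype ι] {G : (ι → ℝ) → ι → ℝ} {v : ι → ℝ}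

lemma maxRatio_apply_le [Nonempty ι] (hmono : Monotone G)
    (hray : ∀ c : ℝ, 0 ≤ c → G (c • v) = c • v) (hv : ∀ i, 0 < v i) {x : ι → ℝ}
    (hx : 0 ≤ maxRatio v x) : maxRatio v (G x) ≤ maxRatio v x :=
  maxRatio_le hv (hray _ hx ▸ hmono (le_maxRatio_smul hv x))

lemma eq_smul_of_maxRatio_iterate_eq [Nonempty ι] (hv : ∀ i, 0 < v i) {k : ℕ}
    (hstrict : ∀ (c : ℝ) (z : ι → ℝ), z ≤ c • v → z ≠ c • v → ∀ i, G^[k] z i < c * v i)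
    {z : ι → ℝ} {β : ℝ} (hz : maxRatio v z = β) (hGz : maxRatio v (G^[k] z) = β) :
    z = β • v := by
  by_contra hne
  have hle : z ≤ β • v := hz ▸ le_maxRatio_smul hv z
  exact (maxRatio_lt hv (hstrict β z hle hne)).ne hGz

theorem exists_tendsto_iterate_smul (hmono : Monotone G)
    (hray : ∀ c : ℝ, 0 ≤ c → G (c • v) = c • v) (hcont : Continuous G) (hv : ∀ i, 0 < v i)
    {k : ℕ} (hstrict : ∀ (c : ℝ) (z : ι → ℝ), z ≤ c • v → z ≠ c • v → ∀ i, G^[k] z i < c * v i)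
    {x : ι → ℝ} (hx : ∀ i, 0 < x i) :
    ∃ β : ℝ, 0 < β ∧ Tendsto (fun n => G^[n] x) atTop (𝓝 (β • v)) := by
  cases isEmpty_or_nonempty ι
  · exact ⟨1, one_pos, tendsto_const_nhds.congr fun _ => Subsingleton.elim _ _⟩
  obtain ⟨a, ha, hax⟩ := exists_pos_smul_le hv hx
  set r : ℕ → ℝ := fun n => maxRatio v (G^[n] x)
  have hlow (n : ℕ) : a • v ≤ G^[n] x :=
    Function.iterate_fixed (hray a ha.le) n ▸ hmono.iterate n hax
  have hr_ge (n : ℕ) : a ≤ r n := le_maxRatio hv (hlow n)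
  have hr_anti : Antitone r := antitone_nat_of_succ_le fun n => by
    simpa only [r, Function.iterate_succ_apply'] using
      maxRatio_apply_le hmono hray hv (ha.le.trans (hr_ge n))
  have hr_bdd : BddBelow (Set.range r) := ⟨a, Set.forall_mem_range.2 hr_ge⟩
  refine ⟨⨅ n, r n, ha.trans_le (le_ciInf hr_ge), ?_⟩
  have hr_lim : Tendsto r atTop (𝓝 (⨅ n, r n)) := tendsto_atTop_ciInf hr_anti hr_bdd
  have hbox (n : ℕ) : G^[n] x ∈ Set.Icc (a • v) (r 0 • v) :=
    ⟨hlow n, (le_maxRatio_smul hv _).trans fun i => by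
      simpa only [Pi.smul_apply, smul_eq_mul] using
        mul_le_mul_of_nonneg_right (hr_anti (Nat.zero_le n)) (hv i).le⟩
  refine tendsto_of_subseq_tendsto fun ns hns => ?_
  obtain ⟨z, -, φ, hφ, hz⟩ := isCompact_Icc.tendsto_subseq fun j => hbox (ns j)
  refine ⟨φ, ?_⟩
  have hN : Tendsto (ns ∘ φ) atTop atTop := hns.comp hφ.tendsto_atTop
  have hrz : maxRatio v z = ⨅ n, r n :=
    tendsto_nhds_unique (((continuous_maxRatio v).tendsto z).comp hz) (hr_lim.comp hN)
  have hrGz : maxRatio v (G^[k] z) = ⨅ n, r n := by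
    refine tendsto_nhds_unique
      (((continuous_maxRatio v).comp (hcont.iterate k)).tendsto z |>.comp hz)
      ((hr_lim.comp ((tendsto_add_atTop_nat k).comp hN)).congr fun j => ?_)
    simp only [r, Function.comp_apply, add_comm _ k, Function.iterate_add_apply]
  rwa [eq_smul_of_maxRatio_iterate_eq hv hstrict hrz hrGz] at hz

end Convergence

section NonnegMatrix

variable {ι : Type*} [Fintype ι]

lemma mulVec_mono_of_nonneg {M : Matrix ι ι ℝ} (hM : ∀ i j, 0 ≤ M i j) :
    Monotone (M *ᵥ ·) :=
  fun _ _ h i => Finset.sum_le_sum fun j _ => mul_le_mul_of_nonneg_left (h j) (hM i j)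

lemma mulVec_lt_mulVec_of_pos {M : Matrix ι ι ℝ} (hM : ∀ i j, 0 < M i j) {x y : ι → ℝ}
    (hle : x ≤ y) (hne : x ≠ y) (i : ι) : (M *ᵥ x) i < (M *ᵥ y) i := by
  obtain ⟨j, hj⟩ := (Pi.lt_def.1 (lt_of_le_of_ne hle hne)).2
  exact Finset.sum_lt_sum (fun j _ => mul_le_mul_of_nonneg_left (hle j) (hM i j).le)
    ⟨j, Finset.mem_univ j, mul_lt_mul_of_pos_left hj (hM i j)⟩

variable [DecidableEq ι]

lemma pow_mulVec_of_mulVec_eq_self {M : Matrix ι ι ℝ} {v : ι → ℝ} (h : M *ᵥ v = v) (n : ℕ) :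
    (M ^ n) *ᵥ v = v := by
  induction n with
  | zero => exact one_mulVec v
  | succ n ih => rw [pow_succ, ← mulVec_mulVec, h, ih]

lemma iterate_le_pow_mulVec {G : (ι → ℝ) → ι → ℝ} {M : Matrix ι ι ℝ} (hM : ∀ i j, 0 ≤ M i j)
    (hG : ∀ x, G x ≤ M *ᵥ x) (n : ℕ) (x : ι → ℝ) : G^[n] x ≤ (M ^ n) *ᵥ x := by
  induction n with
  | zero => simp
  | succ n ih =>
    rw [Function.iterate_succ_apply', pow_succ', ← mulVec_mulVec]
    exact (hG _).trans (mulVec_mono_of_nonneg hM ih)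

lemma iterate_lt_smul_of_le_mulVec {G : (ι → ℝ) → ι → ℝ} {M : Matrix ι ι ℝ} {v : ι → ℝ}
    (hM : ∀ i j, 0 ≤ M i j) (hG : ∀ x, G x ≤ M *ᵥ x) (hMv : M *ᵥ v = v) {k : ℕ}
    (hMk : ∀ i j, 0 < (M ^ k) i j) (c : ℝ) (z : ι → ℝ) (hle : z ≤ c • v) (hne : z ≠ c • v)
    (i : ι) : G^[k] z i < c * v i :=
  calc G^[k] z i ≤ (M ^ k *ᵥ z) i := iterate_le_pow_mulVec hM hG k z i
    _ < (M ^ k *ᵥ (c • v)) i := mulVec_lt_mulVec_of_pos hMk hle hne i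
    _ = c * v i := by rw [mulVec_smul, pow_mulVec_of_mulVec_eq_self hMv]; rfl

end NonnegMatrix

lemma iterate_smul_of_homogeneous {E : Type*} [AddCommMonoid E] [Module ℝ E] {F : E → E}
    (hF : ∀ c : ℝ, 0 ≤ c → ∀ x, F (c • x) = c • F x) {c : ℝ} (hc : 0 ≤ c) (n : ℕ) (x : E) :
    (fun y => c • F y)^[n] x = c ^ n • F^[n] x := by
  induction n with
  | zero => simp
  | succ n ih =>
    rw [Function.iterate_succ_apply', ih, hF _ (pow_nonneg hc n), smul_smul,
      Function.iterate_succ_apply', pow_succ']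

section Bellman

variable {ι : Type*} [Fintype ι] {𝒜 : Finset (Matrix ι ι ℝ)} {hne : 𝒜.Nonempty}

def bellman (𝒜 : Finset (Matrix ι ι ℝ)) (hne : 𝒜.Nonempty) (x : ι → ℝ) : ι → ℝ :=
  fun i => 𝒜.inf' hne fun A => (A *ᵥ x) i

lemma bellman_le_mulVec {A : Matrix ι ι ℝ} (hA : A ∈ 𝒜) (x : ι → ℝ) :
    bellman 𝒜 hne x ≤ A *ᵥ x :=
  fun _ => Finset.inf'_le _ hA

lemma monotone_bellman (hnn : ∀ A ∈ 𝒜, ∀ i j, 0 ≤ A i j) : Monotone (bellman 𝒜 hne) :=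
  fun _ _ h i => Finset.le_inf' _ _ fun A hA =>
    (Finset.inf'_le _ hA).trans (mulVec_mono_of_nonneg (hnn A hA) h i)

lemma bellman_smul {c : ℝ} (hc : 0 ≤ c) (x : ι → ℝ) :
    bellman 𝒜 hne (c • x) = c • bellman 𝒜 hne x := funext fun i => by
  simp only [bellman, mulVec_smul, Pi.smul_apply, smul_eq_mul]
  exact (Finset.apply_inf'_eq_inf'_comp hne _ fun a b => mul_min_of_nonneg a b hc).symm

lemma continuous_bellman : Continuous (bellman 𝒜 hne) :=
  continuous_pi fun i => Continuous.finset_inf'_apply hne fun _ _ =>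
    (continuous_apply i).comp (continuous_const.matrix_mulVec continuous_id)

lemma bellman_eq_smul {A : Matrix ι ι ℝ} (hA : A ∈ 𝒜) {lam : ℝ} {v : ι → ℝ}
    (heig : A *ᵥ v = lam • v) (hle : ∀ B ∈ 𝒜, ∀ i, lam * v i ≤ (B *ᵥ v) i) :
    bellman 𝒜 hne v = lam • v :=
  funext fun i => le_antisymm ((Finset.inf'_le _ hA).trans_eq (by rw [heig]))
    (Finset.le_inf' _ _ fun B hB => hle B hB i)

theorem exists_tendsto_inv_pow_smul_iterate_bellman [DecidableEq ι]
    (hnn : ∀ A ∈ 𝒜, ∀ i j, 0 ≤ A i j) {A : Matrix ι ι ℝ} (hA : A ∈ 𝒜) {k : ℕ}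
    (hpos : ∀ i j, 0 < (A ^ k) i j) {lam : ℝ} (hlam : 0 < lam) {v : ι → ℝ} (hv : ∀ i, 0 < v i)
    (hFv : bellman 𝒜 hne v = lam • v) (heig : A *ᵥ v = lam • v) {x : ι → ℝ} (hx : ∀ i, 0 < x i) :
    ∃ β : ℝ, 0 < β ∧
      Tendsto (fun n => (lam ^ n)⁻¹ • (bellman 𝒜 hne)^[n] x) atTop (𝓝 (β • v)) := by
  have hlam' : 0 ≤ lam⁻¹ := inv_nonneg.2 hlam.le
  set M := lam⁻¹ • A
  set G := fun x => lam⁻¹ • bellman 𝒜 hne x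
  have hM : ∀ i j, 0 ≤ M i j := fun i j => mul_nonneg hlam' (hnn A hA i j)
  have hMv : M *ᵥ v = v := by rw [smul_mulVec, heig, inv_smul_smul₀ hlam.ne']
  have hMk : ∀ i j, 0 < (M ^ k) i j := fun i j => by
    rw [smul_pow]
    exact mul_pos (pow_pos (inv_pos.2 hlam) k) (hpos i j)
  have hGM : ∀ x, G x ≤ M *ᵥ x := fun x => by
    rw [smul_mulVec]
    exact smul_le_smul_of_nonneg_left (bellman_le_mulVec hA x) hlam'
  have hray : ∀ c : ℝ, 0 ≤ c → G (c • v) = c • v := fun c hc => by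
    simp only [G, bellman_smul hc, hFv, smul_comm c lam, inv_smul_smul₀ hlam.ne']
  have hiter (n : ℕ) : G^[n] x = (lam ^ n)⁻¹ • (bellman 𝒜 hne)^[n] x := by
    rw [iterate_smul_of_homogeneous (fun c hc => bellman_smul hc) hlam', inv_pow]
  simp only [← hiter]
  exact exists_tendsto_iterate_smul
    (fun _ _ h => smul_le_smul_of_nonneg_left (monotone_bellman hnn h) hlam') hray
    (continuous_const_smul _ |>.comp continuous_bellman) hv
    (iterate_lt_smul_of_le_mulVec hM hGM hMv hMk) hx

end Bellman

theorem stmt6_general {m : ℕ} (𝒜 : Finset (Matrix (Fin m) (Fin m) ℝ))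
    (hne : 𝒜.Nonempty)
    (hnn : ∀ A ∈ 𝒜, ∀ i j, 0 ≤ A i j)
    (Astar : Matrix (Fin m) (Fin m) ℝ) (hmem : Astar ∈ 𝒜)
    (hprim : _root_.IsPrimitive Astar)
    (lam : ℝ) (hlam : 0 < lam)
    (v : Fin m → ℝ) (hv : ∀ i, 0 < v i)
    (heig : Astar.mulVec v = lam • v)
    (hAv : ∀ A ∈ 𝒜, ∀ i, lam * v i ≤ A.mulVec v i)
    (F : (Fin m → ℝ) → (Fin m → ℝ))
    (hF : ∀ (x : Fin m → ℝ) (a : Fin m), F x a = 𝒜.inf' hne (fun A => A.mulVec x a)) :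
    F v = lam • v ∧
    ∃ β : ℝ, 0 < β ∧ ∀ a : Fin m,
      Tendsto (fun n : ℕ => (F^[n] (fun _ => (1 : ℝ))) a / lam ^ n)
        atTop (nhds (β * v a)) := by
  obtain rfl : F = bellman 𝒜 hne := funext fun x => funext (hF x)
  have hFv : bellman 𝒜 hne v = lam • v := bellman_eq_smul hmem heig hAv
  obtain ⟨k, -, hpos⟩ := hprim
  obtain ⟨β, hβ, hlim⟩ := exists_tendsto_inv_pow_smul_iterate_bellman hnn hmem hpos hlam hv hFv
    heig (x := fun _ => 1) fun _ => one_pos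
  refine ⟨hFv, β, hβ, fun a => ((continuous_apply a).tendsto _ |>.comp hlim).congr fun n => ?_⟩
  simp only [Function.comp_apply, Pi.smul_apply, smul_eq_mul, div_eq_inv_mul]

/-- with `A* ∈ 𝒜` primitive of spectral radius `lam > 0`, Perron
vector `v > 0` with `A*v = lam v`, and `A v ≥ lam v` for all `A ∈ 𝒜`, the
Bellman operator `(ℱx)_a = min_{A ∈ 𝒜} (Ax)_a` satisfies `ℱ(v) = lam • v`,
and the normalized iterates `yₙ = lam⁻ⁿ ℱⁿ(𝟙)` converge to `β v` for some
`β > 0`. -/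
theorem stmt6 {m : ℕ} (𝒜 : Finset (Matrix (Fin m) (Fin m) ℝ))
    (hne : 𝒜.Nonempty)
    (hnn : ∀ A ∈ 𝒜, ∀ i j, 0 ≤ A i j)
    (Astar : Matrix (Fin m) (Fin m) ℝ) (hmem : Astar ∈ 𝒜)
    (hprim : _root_.IsPrimitive Astar)
    (lam : ℝ) (hlam : 0 < lam) (hlamspec : lam = specRad Astar)
    (v : Fin m → ℝ) (hv : ∀ i, 0 < v i)
    (heig : Astar.mulVec v = lam • v)
    (hAv : ∀ A ∈ 𝒜, ∀ i, lam * v i ≤ A.mulVec v i)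
    (F : (Fin m → ℝ) → (Fin m → ℝ))
    (hF : ∀ (x : Fin m → ℝ) (a : Fin m), F x a = 𝒜.inf' hne (fun A => A.mulVec x a)) :
    F v = lam • v ∧
    ∃ β : ℝ, 0 < β ∧ ∀ a : Fin m,
      Tendsto (fun n : ℕ => (F^[n] (fun _ => (1 : ℝ))) a / lam ^ n)
        atTop (nhds (β * v a)) :=
  stmt6_general 𝒜 hne hnn Astar hmem hprim lam hlam v hv heig hAv F hF
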